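/- If (a, b, c) is a primitive Pythagorean triple, then (a+2b+2c, 2a+b+2c, 2a+2b+3c) is also a primitive Pythagorean triple. -/

import Mathlib

theorem stmt_16 (a b c : ℤ) (ha : 0 < a) (hb : 0 < b) (hc : 0 < c)
    (h : a ^ 2 + b ^ 2 = c ^ 2) (hgcd : Int.gcd (Int.gcd a b) c = 1) :
    0 < a + 2 * b + 2 * c ∧ 0 < 2 * a + b + 2 * c ∧ 0 < 2 * a + 2 * b + 3 * c ∧
    (a + 2 * b + 2 * c) ^ 2 + (2 * a + b + 2 * c) ^ 2 = (2 * a + 2 * b + 3 * c) ^ 2 ∧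
    Int.gcd (Int.gcd (a + 2 * b + 2 * c) (2 * a + b + 2 * c)) (2 * a + 2 * b + 3 * c) = 1 := by
  refine ⟨by linarith, by linarith, by linarith, by nlinarith [h], ?_⟩
  set A := a + 2 * b + 2 * c with hAdef
  set B := 2 * a + b + 2 * c with hBdef
  set C := 2 * a + 2 * b + 3 * c with hCdef
  set d : ℕ := Int.gcd (Int.gcd A B) C with hd
  have hA : (d : ℤ) ∣ A := dvd_trans (Int.gcd_dvd_left _ _) (Int.gcd_dvd_left _ _)
  have hB : (d : ℤ) ∣ B := dvd_trans (Int.gcd_dvd_left _ _) (Int.gcd_dvd_right _ _)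
  have hC : (d : ℤ) ∣ C := Int.gcd_dvd_right _ _
  have hAB : (d : ℤ) ∣ Int.gcd (Int.gcd A B) C := by
    exact_mod_cast Int.natCast_dvd_natCast.mpr (dvd_refl d)
  have hda : (d : ℤ) ∣ a := by
    have : a = A + 2 * B - 2 * C := by rw [hAdef, hBdef, hCdef]; ring
    rw [this]; exact dvd_sub (dvd_add hA (Dvd.dvd.mul_left hB 2)) (Dvd.dvd.mul_left hC 2)
  have hdb : (d : ℤ) ∣ b := by
    have : b = 2 * A + B - 2 * C := by rw [hAdef, hBdef, hCdef]; ring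
    rw [this]; exact dvd_sub (dvd_add (Dvd.dvd.mul_left hA 2) hB) (Dvd.dvd.mul_left hC 2)
  have hdc : (d : ℤ) ∣ c := by
    have : c = 3 * C - 2 * A - 2 * B := by rw [hAdef, hBdef, hCdef]; ring
    rw [this]
    exact dvd_sub (dvd_sub (Dvd.dvd.mul_left hC 3) (Dvd.dvd.mul_left hA 2)) (Dvd.dvd.mul_left hB 2)
  have : (d : ℤ) ∣ (Int.gcd (Int.gcd a b) c : ℤ) :=
    Int.natCast_dvd_natCast.mpr (Int.dvd_gcd (Int.natCast_dvd_natCast.mpr (Int.dvd_gcd hda hdb)) hdc)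
  rw [hgcd] at this
  exact Nat.eq_one_of_dvd_one (by exact_mod_cast this)
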